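/- Let q be a prime power, ψ a nontrivial additive character of F_q, and a₁,a₂,a₃ ∈ F_q^×, g₁,g₂,g₃ ∈ F_q^× with orders s₁,s₂,s₃, and 1 ≤ r ≤ s₃. Then (1/q)·Σ_{μ ∈ F_q^×} |Σ_{x₁=0}^{s₁−1} ψ(a₁μg₁^{x₁})|² · |Σ_{x₂=0}^{s₂−1} ψ(a₂μg₂^{x₂})|² · |Σ_{x₃=0}^{r−1} ψ(a₃μg₃^{x₃})|² ≤ q²·r. -/

import Mathlib

/-!
Write `T_H(b) = |Σ_{h ∈ H} ψ(b h)|²`. Orthogonality of additive characters gives the mean square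
identity `Σ_{μ ∈ F} |Σ_{t ∈ S} ψ(μ t)|² = q |S|` for any set `S` of distinct field elements.
For a subgroup `H = ⟨g⟩` of `Fˣ` and `b ≠ 0`, `T_H` is constant on the coset `b H`, whose `|H|`
points contribute at most `q |H|` to the mean square, so `T_H(b) ≤ q`. Bounding the first two
factors pointwise by `q` and summing the third one by the mean square identity over
`S = {1, g₃, …, g₃^{r-1}}` gives `q² · q r`.
-/

open Finset

theorem sum_comp_le_sum_of_injective {ι κ : Type*} [Fintype ι] [Fintype κ] {e : ι → κ}
    (he : Function.Injective e) {f : κ → ℝ} (hf : ∀ k, 0 ≤ f k) :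
    ∑ i, f (e i) ≤ ∑ k, f k := by
  classical
  rw [← sum_image he.injOn]
  exact sum_le_univ_sum_of_nonneg hf

theorem sum_range_orderOf_eq_sum_zpowers {G M : Type*} [Group G] [AddCommMonoid M] {g : G}
    (hg : IsOfFinOrder g) [Fintype (Subgroup.zpowers g)] (f : G → M) :
    ∑ x ∈ range (orderOf g), f (g ^ x) = ∑ h : Subgroup.zpowers g, f h := by
  rw [← Fin.sum_univ_eq_sum_range (fun x ↦ f (g ^ x))]
  exact Fintype.sum_equiv (finEquivZPowers hg) _ _ fun _ ↦ rfl

namespace AddChar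

variable {F : Type*} [Field F] [Fintype F] {ψ : AddChar F ℂ}

theorem sum_norm_sq_sum_mul_eq (hψ : ψ.IsPrimitive) {ι : Type*} (s : Finset ι) {f : ι → F}
    (hf : Set.InjOn f s) :
    ∑ μ : F, ‖∑ i ∈ s, ψ (μ * f i)‖ ^ 2 = Fintype.card F * #s := by
  classical
  have hexpand : ∀ μ : F, (‖∑ i ∈ s, ψ (μ * f i)‖ : ℂ) ^ 2 =
      ∑ i ∈ s, ∑ j ∈ s, ψ (μ * (f i - f j)) := fun μ ↦ by
    rw [← Complex.mul_conj', map_sum, sum_mul_sum]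
    refine sum_congr rfl fun i _ ↦ sum_congr rfl fun j _ ↦ ?_
    rw [← map_neg_eq_conj, ← map_add_eq_mul, mul_sub, sub_eq_add_neg]
  have horth : ∀ i ∈ s, ∀ j ∈ s, ∑ μ : F, ψ (μ * (f i - f j)) =
      if i = j then (Fintype.card F : ℂ) else 0 := fun i hi j hj ↦ by
    rw [sum_mulShift _ hψ, sub_eq_zero, Nat.cast_ite, Nat.cast_zero]
    exact if_congr (hf.eq_iff hi hj) rfl rfl
  apply Complex.ofReal_injective
  push_cast
  simp_rw [hexpand]
  rw [sum_comm, sum_congr rfl fun i hi ↦ sum_comm.trans (sum_congr rfl fun j hj ↦ horth i hi j hj)]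
  simp [mul_comm]

theorem norm_sq_sum_subgroup_le (hψ : ψ.IsPrimitive) (H : Subgroup Fˣ) [Fintype H] {b : F}
    (hb : b ≠ 0) : ‖∑ h : H, ψ (b * ((h : Fˣ) : F))‖ ^ 2 ≤ Fintype.card F := by
  set T : F → ℝ := fun μ ↦ ‖∑ h : H, ψ (μ * ((h : Fˣ) : F))‖ ^ 2 with hT
  have hinv : ∀ k : H, T (b * ((k : Fˣ) : F)) = T b := fun k ↦ by
    simp only [hT]
    congr 2
    exact Fintype.sum_equiv (Equiv.mulLeft k) _ _ fun h ↦ by simp [mul_assoc]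
  have hinj : Function.Injective fun k : H ↦ b * ((k : Fˣ) : F) := fun k l hkl ↦
    Subtype.ext (Units.ext (mul_left_cancel₀ hb hkl))
  have hcard : (Fintype.card H : ℝ) * T b ≤ Fintype.card H * Fintype.card F :=
    calc (Fintype.card H : ℝ) * T b = ∑ k : H, T (b * ((k : Fˣ) : F)) := by simp [hinv]
      _ ≤ ∑ μ : F, T μ := sum_comp_le_sum_of_injective hinj fun _ ↦ sq_nonneg _
      _ = Fintype.card H * Fintype.card F := by
        rw [sum_norm_sq_sum_mul_eq hψ univ (f := fun h : H ↦ ((h : Fˣ) : F))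
          (Units.val_injective.comp Subtype.val_injective).injOn, card_univ, mul_comm]
  exact le_of_mul_le_mul_left hcard (by exact_mod_cast Fintype.card_pos)

theorem norm_sq_sum_range_orderOf_le (hψ : ψ.IsPrimitive) (g : Fˣ) {b : F} (hb : b ≠ 0) :
    ‖∑ x ∈ range (orderOf g), ψ (b * (g : F) ^ x)‖ ^ 2 ≤ Fintype.card F := by
  classical
  have hzpowers := sum_range_orderOf_eq_sum_zpowers (isOfFinOrder_of_finite g)
    fun h : Fˣ ↦ ψ (b * (h : F))
  simp only [Units.val_pow_eq_pow_val] at hzpowers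
  rw [hzpowers]
  exact norm_sq_sum_subgroup_le hψ _ hb

end AddChar

theorem stmt_16_general {F : Type*} [Field F] [Fintype F] [DecidableEq F] (ψ : AddChar F ℂ)
    (hψ : ∃ u : F, ψ u ≠ 1) (a₁ a₂ a₃ g₁ g₂ g₃ : Fˣ) (r : ℕ)
    (hr3 : r ≤ orderOf g₃) :
    (1 / (Fintype.card F : ℝ)) * ∑ μ : Fˣ,
        (‖∑ x ∈ range (orderOf g₁), ψ ((a₁ : F) * (μ : F) * (g₁ : F) ^ x)‖ ^ 2 *
          ‖∑ x ∈ range (orderOf g₂), ψ ((a₂ : F) * (μ : F) * (g₂ : F) ^ x)‖ ^ 2 *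
          ‖∑ x ∈ range r, ψ ((a₃ : F) * (μ : F) * (g₃ : F) ^ x)‖ ^ 2) ≤
      (Fintype.card F : ℝ) ^ 2 * r := by
  have hprim : ψ.IsPrimitive := AddChar.IsPrimitive.of_ne_one fun h ↦ by simp [h] at hψ
  set q : ℝ := (Fintype.card F : ℝ)
  set T₃ : F → ℝ := fun μ ↦ ‖∑ x ∈ range r, ψ (μ * (g₃ : F) ^ x)‖ ^ 2
  have hpow : Set.InjOn ((g₃ : F) ^ ·) (range r) :=
    (pow_injOn_Iio_orderOf (x := (g₃ : F))).mono fun x hx ↦ by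
      simpa [orderOf_units] using (mem_range.mp hx).trans_le hr3
  have hthird : ∑ μ : Fˣ, T₃ (a₃ * μ) ≤ q * r := by
    refine (sum_comp_le_sum_of_injective (e := fun μ : Fˣ ↦ (a₃ : F) * μ) (f := T₃)
      (fun μ ν h ↦ ?_) fun _ ↦ sq_nonneg _).trans_eq ?_
    · exact Units.ext (mul_left_cancel₀ a₃.ne_zero h)
    · rw [AddChar.sum_norm_sq_sum_mul_eq hprim _ hpow, card_range]
  have hterm : ∀ μ : Fˣ,
      ‖∑ x ∈ range (orderOf g₁), ψ ((a₁ : F) * (μ : F) * (g₁ : F) ^ x)‖ ^ 2 *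
        ‖∑ x ∈ range (orderOf g₂), ψ ((a₂ : F) * (μ : F) * (g₂ : F) ^ x)‖ ^ 2 *
        T₃ (a₃ * μ) ≤ q * q * T₃ (a₃ * μ) := fun μ ↦ by
    have h₁ := AddChar.norm_sq_sum_range_orderOf_le hprim g₁ (mul_ne_zero a₁.ne_zero μ.ne_zero)
    have h₂ := AddChar.norm_sq_sum_range_orderOf_le hprim g₂ (mul_ne_zero a₂.ne_zero μ.ne_zero)
    gcongr
  have hq : 0 < q := Nat.cast_pos.mpr Fintype.card_pos
  calc _ ≤ 1 / q * ∑ μ : Fˣ, q * q * T₃ (a₃ * μ) :=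
        mul_le_mul_of_nonneg_left (sum_le_sum fun μ _ ↦ hterm μ) (by positivity)
    _ = q * ∑ μ : Fˣ, T₃ (a₃ * μ) := by rw [← mul_sum]; field_simp
    _ ≤ q * (q * r) := by gcongr
    _ = q ^ 2 * r := by ring

/-- The key bound in the proof of Lemma 1:
`(1/q)·Σ_{μ ∈ F_q^×} |Σ_{x₁<s₁} ψ(a₁μg₁^{x₁})|²·|Σ_{x₂<s₂} ψ(a₂μg₂^{x₂})|²·|Σ_{x₃<r} ψ(a₃μg₃^{x₃})|² ≤ q²·r`. -/
theorem stmt_16 {F : Type*} [Field F] [Fintype F] [DecidableEq F] (ψ : AddChar F ℂ)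
    (hψ : ∃ u : F, ψ u ≠ 1) (a₁ a₂ a₃ g₁ g₂ g₃ : Fˣ) (r : ℕ)
    (hr : 1 ≤ r) (hr3 : r ≤ orderOf g₃) :
    (1 / (Fintype.card F : ℝ)) * ∑ μ : Fˣ,
        (‖∑ x ∈ range (orderOf g₁), ψ ((a₁ : F) * (μ : F) * (g₁ : F) ^ x)‖ ^ 2 *
          ‖∑ x ∈ range (orderOf g₂), ψ ((a₂ : F) * (μ : F) * (g₂ : F) ^ x)‖ ^ 2 *
          ‖∑ x ∈ range r, ψ ((a₃ : F) * (μ : F) * (g₃ : F) ^ x)‖ ^ 2) ≤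
      (Fintype.card F : ℝ) ^ 2 * r :=
  stmt_16_general ψ hψ a₁ a₂ a₃ g₁ g₂ g₃ r hr3
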